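/- Let G be an n×n real matrix with G = V D V⁻¹ for an invertible matrix V and a diagonal matrix D with all diagonal entries D_ii ≥ 0; let E and D♯ be as in the context. Let Π : Fin n → ℝ satisfy ∑_j Π_j = 1 and (V E V⁻¹)_{ij} = Π_j for all i, j, and let x : Fin n → ℝ. Then the improper integral ∫₀^∞ ( ∑_{i,j} x_i x_j Π_i (exp(−G·τ))_{ij} − (∑_i x_i Π_i)² ) dτ converges and equals ∑_{i,j} Π_i x_i (V D♯ V⁻¹)_{ij} x_j. -/

import Mathlib

/-!
Diagonalising `G = V D V⁻¹` gives `exp (-τ G) = V exp (-τ D) V⁻¹`, so the autocovariance is a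
finite combination `∑ₖ aₖ (exp (-dₖ τ) - Eₖₖ)`: the stationarity hypothesis says that
`V E V⁻¹ = P(∞)` has every row equal to `Π`, which turns `⟨X⟩²` into the contribution of the zero
modes. Those cancel, and each mode with `dₖ > 0` integrates to `dₖ⁻¹`, which reassembles into the
quadratic form of `V D♯ V⁻¹`.
-/

open Matrix MeasureTheory Finset

section QuadraticForm

variable {ι R : Type*} [Fintype ι] [CommSemiring R]

lemma sum_sum_mul_mul_mul_eq_dotProduct_mulVec (x p : ι → R) (A : Matrix ι ι R) :
    ∑ i, ∑ j, x i * x j * p i * A i j = (fun i => x i * p i) ⬝ᵥ (A *ᵥ x) := by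
  simp only [dotProduct, mulVec, mul_sum]
  exact sum_congr rfl fun i _ => sum_congr rfl fun j _ => by ring

lemma dotProduct_mulVec_mul_diagonal_mul [DecidableEq ι] (u v f : ι → R) (V W : Matrix ι ι R) :
    u ⬝ᵥ ((V * diagonal f * W) *ᵥ v) = ∑ k, (u ᵥ* V) k * (W *ᵥ v) k * f k := by
  rw [← mulVec_mulVec, ← mulVec_mulVec, dotProduct_mulVec]
  simp only [dotProduct, mulVec_diagonal]
  exact sum_congr rfl fun k _ => by ring

lemma dotProduct_mulVec_of_rows_eq (u v p : ι → R) {P : Matrix ι ι R} (hP : ∀ i j, P i j = p j) :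
    u ⬝ᵥ (P *ᵥ v) = (∑ i, u i) * (p ⬝ᵥ v) := by
  simp only [dotProduct, mulVec, hP, sum_mul]

end QuadraticForm

lemma exp_neg_smul_conj_diagonal {ι : Type*} [Fintype ι] [DecidableEq ι] {V : Matrix ι ι ℝ}
    (hV : IsUnit V) (d : ι → ℝ) (τ : ℝ) :
    NormedSpace.exp (-(τ • (V * diagonal d * V⁻¹)))
      = V * diagonal (fun k => Real.exp (-(d k * τ))) * V⁻¹ := by
  have hconj : -(τ • (V * diagonal d * V⁻¹)) = V * diagonal (fun k => -(d k * τ)) * V⁻¹ := by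
    have : diagonal (fun k => -(d k * τ)) = (-τ) • diagonal d := by
      rw [← diagonal_smul]
      congr 1
      ext k
      simp [mul_comm]
    rw [this, Matrix.mul_smul, Matrix.smul_mul, neg_smul]
  rw [hconj, exp_conj _ _ hV, exp_diagonal, Real.exp_eq_exp_ℝ, Pi.exp_def]

lemma integrableOn_exp_neg_mul_sub_ite {d : ℝ} (hd : 0 ≤ d) :
    IntegrableOn (fun τ => Real.exp (-(d * τ)) - if d = 0 then 1 else 0) (Set.Ioi 0) := by
  rcases hd.eq_or_lt with rfl | hpos
  · simp
  · simpa [hpos.ne', neg_mul] using integrableOn_exp_mul_Ioi (neg_neg_of_pos hpos) 0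

lemma integral_exp_neg_mul_sub_ite {d : ℝ} (hd : 0 ≤ d) :
    ∫ τ in Set.Ioi 0, (Real.exp (-(d * τ)) - if d = 0 then 1 else 0)
      = if d ≠ 0 then d⁻¹ else 0 := by
  rcases hd.eq_or_lt with rfl | hpos
  · simp
  · simp [hpos.ne', ← neg_mul, integral_exp_mul_Ioi (neg_neg_of_pos hpos)]

theorem stmt_4_general {n : ℕ} (G V E Dsharp : Matrix (Fin n) (Fin n) ℝ) (d : Fin n → ℝ)
    (hV : IsUnit V.det) (hd : ∀ i, 0 ≤ d i)
    (hG : G = V * Matrix.diagonal d * V⁻¹)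
    (hE : E = Matrix.diagonal (fun i => if d i = 0 then (1 : ℝ) else 0))
    (hDs : Dsharp = Matrix.diagonal (fun i => if d i ≠ 0 then (d i)⁻¹ else 0))
    (Pi x : Fin n → ℝ)
    (hPistat : ∀ i j, (V * E * V⁻¹) i j = Pi j) :
    IntegrableOn
      (fun τ : ℝ =>
        (∑ i, ∑ j, x i * x j * Pi i * (NormedSpace.exp (-(τ • G))) i j)
          - (∑ i, x i * Pi i) ^ 2)
      (Set.Ioi (0 : ℝ)) ∧
    ∫ τ in Set.Ioi (0 : ℝ),
        ((∑ i, ∑ j, x i * x j * Pi i * (NormedSpace.exp (-(τ • G))) i j)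
          - (∑ i, x i * Pi i) ^ 2)
      = ∑ i, ∑ j, Pi i * x i * (V * Dsharp * V⁻¹) i j * x j := by
  set a : Fin n → ℝ := fun k => ((fun i => x i * Pi i) ᵥ* V) k * (V⁻¹ *ᵥ x) k
  set f : Fin n → ℝ → ℝ := fun k τ => Real.exp (-(d k * τ)) - if d k = 0 then 1 else 0
  have hVu : IsUnit V := (isUnit_iff_isUnit_det V).mpr hV
  have hsq : (∑ i, x i * Pi i) ^ 2 = ∑ k, a k * if d k = 0 then 1 else 0 := by
    calc (∑ i, x i * Pi i) ^ 2 = (fun i => x i * Pi i) ⬝ᵥ ((V * E * V⁻¹) *ᵥ x) := by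
          rw [dotProduct_mulVec_of_rows_eq _ _ _ hPistat, sq, dotProduct_comm Pi x]; rfl
      _ = _ := by rw [hE, dotProduct_mulVec_mul_diagonal_mul]
  have hintegrand : ∀ τ : ℝ, (∑ i, ∑ j, x i * x j * Pi i * (NormedSpace.exp (-(τ • G))) i j)
      - (∑ i, x i * Pi i) ^ 2 = ∑ k, a k * f k τ := fun τ => by
    rw [hG, exp_neg_smul_conj_diagonal hVu, sum_sum_mul_mul_mul_eq_dotProduct_mulVec,
      dotProduct_mulVec_mul_diagonal_mul, hsq, ← sum_sub_distrib]
    simp only [a, f, mul_sub]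
  have hf : ∀ k ∈ univ, Integrable (fun τ => a k * f k τ) (volume.restrict (Set.Ioi 0)) :=
    fun k _ => (integrableOn_exp_neg_mul_sub_ite (hd k)).const_mul (a k)
  simp only [hintegrand]
  refine ⟨integrable_finsetSum _ hf, ?_⟩
  rw [integral_finsetSum _ hf, hDs]
  calc ∑ k, ∫ τ in Set.Ioi 0, a k * f k τ = ∑ k, a k * if d k ≠ 0 then (d k)⁻¹ else 0 := by
        simp only [f, integral_const_mul, integral_exp_neg_mul_sub_ite (hd _)]
    _ = _ := by
        rw [← dotProduct_mulVec_mul_diagonal_mul, ← sum_sum_mul_mul_mul_eq_dotProduct_mulVec]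
        exact sum_congr rfl fun i _ => sum_congr rfl fun j _ => by ring

/-- Proposition 1: the diffusion coefficient of a Markov chain, defined as the improper
integral of the stationary autocovariance, equals the quadratic form of the group
inverse `V D♯ V⁻¹` of the generator `G = V D V⁻¹`. -/
theorem stmt_4 {n : ℕ} (G V E Dsharp : Matrix (Fin n) (Fin n) ℝ) (d : Fin n → ℝ)
    (hV : IsUnit V.det) (hd : ∀ i, 0 ≤ d i)
    (hG : G = V * Matrix.diagonal d * V⁻¹)
    (hE : E = Matrix.diagonal (fun i => if d i = 0 then (1 : ℝ) else 0))
    (hDs : Dsharp = Matrix.diagonal (fun i => if d i ≠ 0 then (d i)⁻¹ else 0))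
    (Pi x : Fin n → ℝ)
    (hPisum : ∑ j, Pi j = 1)
    (hPistat : ∀ i j, (V * E * V⁻¹) i j = Pi j) :
    IntegrableOn
      (fun τ : ℝ =>
        (∑ i, ∑ j, x i * x j * Pi i * (NormedSpace.exp (-(τ • G))) i j)
          - (∑ i, x i * Pi i) ^ 2)
      (Set.Ioi (0 : ℝ)) ∧
    ∫ τ in Set.Ioi (0 : ℝ),
        ((∑ i, ∑ j, x i * x j * Pi i * (NormedSpace.exp (-(τ • G))) i j)
          - (∑ i, x i * Pi i) ^ 2)
      = ∑ i, ∑ j, Pi i * x i * (V * Dsharp * V⁻¹) i j * x j :=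
  stmt_4_general G V E Dsharp d hV hd hG hE hDs Pi x hPistat
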